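/- Let H be a separable complex Hilbert space and let x, y : ℤ → H form a pair of dual Riesz bases for H. Then the family consisting of (n ↦ x_{4n} − x_{4n−1}), (n ↦ x_{4n}), (n ↦ x_{4n+1} − x_{4n}), and (n ↦ x_{4n} − 2x_{4n+1} + x_{4n+2}) is a Riesz basis for H whose dual Riesz basis is (n ↦ −y_{4n−1}), (n ↦ y_{4n−1} + y_{4n} + y_{4n+1} + y_{4n+2}), (n ↦ y_{4n+1} + 2y_{4n+2}), and (n ↦ y_{4n+2}) respectively; in particular, for every F ∈ H, F = ∑_{n∈ℤ} [ ⟨F, x_{4n} − x_{4n−1}⟩(−y_{4n−1}) + ⟨F, x_{4n}⟩(y_{4n−1} + y_{4n} + y_{4n+1} + y_{4n+2}) + ⟨F, x_{4n+1} − x_{4n}⟩(y_{4n+1} + 2y_{4n+2}) + ⟨F, x_{4n} − 2x_{4n+1} + x_{4n+2}⟩ y_{4n+2} ] with unconditional convergence over Fin 4 × ℤ. -/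

import Mathlib

noncomputable section
open scoped Classical

local notation "⟪" f ", " g "⟫" => @inner ℂ _ _ g f

/-- A family `x : ι → H` is a Riesz basis for `H` if it is the image of a Hilbert
(orthonormal) basis of `H` under a continuous linear equivalence of `H`. -/
def IsRieszBasis {H : Type*} [NormedAddCommGroup H] [InnerProductSpace ℂ H]
    {ι : Type*} (x : ι → H) : Prop :=
  ∃ (e : HilbertBasis ι ℂ H) (T : H ≃L[ℂ] H), ∀ i, x i = T (e i)

/-- Families `x, y : ι → H` form a pair of dual Riesz bases: both are Riesz bases,
they are biorthogonal, and `∑ᵢ ⟨f, yᵢ⟩ xᵢ = f` for every `f` (inner product linear in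
the first argument, conjugate-linear in the second). -/
def IsDualRieszBasisPair {H : Type*} [NormedAddCommGroup H] [InnerProductSpace ℂ H]
    {ι : Type*} (x y : ι → H) : Prop :=
  IsRieszBasis x ∧ IsRieszBasis y ∧
    (∀ i j, ⟪x i, y j⟫ = if i = j then (1 : ℂ) else 0) ∧
    ∀ f : H, HasSum (fun i => ⟪f, y i⟫ • x i) f

/-!
Write `x = T ∘ e` with `e` a Hilbert basis and `T` invertible, and regroup `ℤ` into blocks
`(k, n) ↦ 4n + k - 1`. Then `z` is obtained from `x` by applying the same invertible `4 × 4`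
matrix `A` of finite differences inside every block, so `z = T ∘ M ∘ e` where `M = blockMap A`
acts on each block of basis vectors by `A`; hence `z` is a Riesz basis. The block matrix `D`
of `w` satisfies `A Dᴴ = 1`, which gives biorthogonality of `z` and `w`. A family
biorthogonal to a Riesz basis `T ∘ e` must be `(T⁻¹)* ∘ e`, and such pairs are dual Riesz
bases in both orders.
-/

open ContinuousLinearMap Submodule
open scoped Matrix

section HilbertBasis

variable {ι ι' 𝕜 E : Type*} [RCLike 𝕜] [NormedAddCommGroup E] [InnerProductSpace 𝕜 E]

def HilbertBasis.compEquiv [CompleteSpace E] (b : HilbertBasis ι 𝕜 E) (σ : ι' ≃ ι) :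
    HilbertBasis ι' 𝕜 E :=
  HilbertBasis.mk (b.orthonormal.comp σ σ.injective)
    (by rw [σ.surjective.range_comp, b.dense_span])

@[simp]
lemma HilbertBasis.compEquiv_apply [CompleteSpace E] (b : HilbertBasis ι 𝕜 E) (σ : ι' ≃ ι)
    (i : ι') : b.compEquiv σ i = b (σ i) := by
  simp [HilbertBasis.compEquiv]

lemma HilbertBasis.continuousLinearMap_ext {F : Type*} [NormedAddCommGroup F] [NormedSpace 𝕜 F]
    (b : HilbertBasis ι 𝕜 E) {f g : E →L[𝕜] F} (h : ∀ i, f (b i) = g (b i)) : f = g :=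
  ext_on (dense_iff_topologicalClosure_eq_top.2 b.dense_span) (by rintro _ ⟨i, rfl⟩; exact h i)

lemma HilbertBasis.eq_zero_of_forall_inner_eq_zero (b : HilbertBasis ι 𝕜 E) {v : E}
    (h : ∀ i, inner 𝕜 v (b i) = 0) : v = 0 :=
  b.repr.injective <| by ext i; simp [b.repr_apply_apply, inner_eq_zero_symm.1 (h i)]

def HilbertBasis.permute [CompleteSpace E] (b : HilbertBasis ι 𝕜 E) (σ : ι ≃ ι) :
    E ≃ₗᵢ[𝕜] E :=
  b.repr.trans (b.compEquiv σ).repr.symm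

lemma HilbertBasis.permute_apply [CompleteSpace E] (b : HilbertBasis ι 𝕜 E) (σ : ι ≃ ι)
    (i : ι) :
    b.permute σ (b i) = b (σ i) := by
  classical
  simp [HilbertBasis.permute, HilbertBasis.repr_self, HilbertBasis.repr_symm_single]

end HilbertBasis

namespace ContinuousLinearEquiv

variable {𝕜 E F : Type*} [RCLike 𝕜] [NormedAddCommGroup E] [InnerProductSpace 𝕜 E]
  [CompleteSpace E] [NormedAddCommGroup F] [InnerProductSpace 𝕜 F] [CompleteSpace F]

def adjoint (T : E ≃L[𝕜] F) : F ≃L[𝕜] E :=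
  equivOfInverse (ContinuousLinearMap.adjoint (T : E →L[𝕜] F))
    (ContinuousLinearMap.adjoint (T.symm : F →L[𝕜] E))
    (fun v => by rw [← comp_apply, ← adjoint_comp, coe_comp_coe_symm, adjoint_id, id_apply])
    (fun v => by rw [← comp_apply, ← adjoint_comp, coe_symm_comp_coe, adjoint_id, id_apply])

lemma adjoint_apply (T : E ≃L[𝕜] F) (v : F) :
    T.adjoint v = ContinuousLinearMap.adjoint (T : E →L[𝕜] F) v := rfl

end ContinuousLinearEquiv

namespace HilbertBasis

variable {𝕜 E m κ : Type*} [RCLike 𝕜] [NormedAddCommGroup E] [InnerProductSpace 𝕜 E]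
  [CompleteSpace E] [DecidableEq m] (b : HilbertBasis (m × κ) 𝕜 E)

abbrev blockSpan (k : m) : Submodule 𝕜 E :=
  (span 𝕜 (Set.range fun n => b (k, n))).topologicalClosure

lemma starProjection_blockSpan_apply (k j : m) (n : κ) :
    (b.blockSpan k).starProjection (b (j, n)) = if j = k then b (j, n) else 0 := by
  split_ifs with h
  · subst h
    exact starProjection_eq_self_iff.2
      (le_topologicalClosure _ (subset_span ⟨n, rfl⟩))
  · refine (starProjection_apply_eq_zero_iff _).2 ?_
    rw [blockSpan, orthogonal_closure]
    refine isOrtho_span.2 ?_ (subset_span rfl)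
    rintro _ rfl _ ⟨n', rfl⟩
    exact b.orthonormal.2 fun h' => h (congrArg Prod.fst h')

def blockUnit (j k : m) : E →L[𝕜] E :=
  ((b.permute ((Equiv.swap j k).prodCongr (Equiv.refl κ))).toContinuousLinearEquiv :
    E →L[𝕜] E) ∘L (b.blockSpan k).starProjection

lemma blockUnit_apply (j k k' : m) (n : κ) :
    b.blockUnit j k (b (k', n)) = if k' = k then b (j, n) else 0 := by
  rw [blockUnit, comp_apply, starProjection_blockSpan_apply]
  split_ifs with h
  · subst h; simp [permute_apply]
  · simp

variable [Fintype m]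

def blockMap (A : Matrix m m 𝕜) : E →L[𝕜] E :=
  ∑ k, ∑ j, A k j • b.blockUnit j k

lemma blockMap_apply (A : Matrix m m 𝕜) (k : m) (n : κ) :
    b.blockMap A (b (k, n)) = ∑ j, A k j • b (j, n) := by
  simp [blockMap, sum_apply, blockUnit_apply]

lemma blockMap_mul (A B : Matrix m m 𝕜) :
    b.blockMap (A * B) = b.blockMap B ∘L b.blockMap A := by
  refine b.continuousLinearMap_ext fun ⟨k, n⟩ => ?_
  simp only [comp_apply, blockMap_apply, map_sum, map_smul, Finset.smul_sum, smul_smul,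
    Matrix.mul_apply, Finset.sum_smul]
  exact Finset.sum_comm

lemma blockMap_one : b.blockMap (1 : Matrix m m 𝕜) = ContinuousLinearMap.id 𝕜 E :=
  b.continuousLinearMap_ext fun ⟨k, n⟩ => by simp [blockMap_apply, Matrix.one_apply]

def blockEquiv (A B : Matrix m m 𝕜) (hAB : A * B = 1) : E ≃L[𝕜] E :=
  ContinuousLinearEquiv.equivOfInverse (b.blockMap A) (b.blockMap B)
    (fun v => by rw [← comp_apply, ← blockMap_mul, hAB, blockMap_one, id_apply])
    (fun v => by
      rw [← comp_apply, ← blockMap_mul, mul_eq_one_comm.1 hAB, blockMap_one, id_apply])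

lemma blockEquiv_apply (A B : Matrix m m 𝕜) (hAB : A * B = 1) (k : m) (n : κ) :
    b.blockEquiv A B hAB (b (k, n)) = ∑ j, A k j • b (j, n) :=
  b.blockMap_apply A k n

end HilbertBasis

section RieszBasis

variable {H ι : Type*} [NormedAddCommGroup H] [InnerProductSpace ℂ H] [CompleteSpace H]

lemma hasSum_inner_adjoint_symm_smul (b : HilbertBasis ι ℂ H) (T : H ≃L[ℂ] H) (f : H) :
    HasSum (fun i => ⟪f, T.symm.adjoint (b i)⟫ • T (b i)) f := by
  simpa [T.symm.adjoint_apply, adjoint_inner_left, b.repr_apply_apply] using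
    (b.hasSum_repr (T.symm f)).mapL (T : H →L[ℂ] H)

lemma inner_apply_adjoint_symm (b : HilbertBasis ι ℂ H) (T : H ≃L[ℂ] H) (i j : ι) :
    ⟪T (b i), T.symm.adjoint (b j)⟫ = if i = j then 1 else 0 := by
  simp [T.symm.adjoint_apply, adjoint_inner_left, orthonormal_iff_ite.1 b.orthonormal, eq_comm]

lemma eq_adjoint_symm_of_biorthogonal (b : HilbertBasis ι ℂ H) (T : H ≃L[ℂ] H) {w : ι → H}
    (hw : ∀ i j, ⟪T (b i), w j⟫ = if i = j then 1 else 0) (j : ι) :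
    w j = T.symm.adjoint (b j) := by
  rw [← sub_eq_zero]
  refine T.adjoint.map_eq_zero_iff.1 (b.eq_zero_of_forall_inner_eq_zero fun i => ?_)
  rw [T.adjoint_apply, adjoint_inner_left, inner_sub_left]
  exact sub_eq_zero.2 ((hw i j).trans (inner_apply_adjoint_symm b T i j).symm)

lemma IsDualRieszBasisPair.of_biorthogonal {x w : ι → H} (hx : IsRieszBasis x)
    (hw : ∀ i j, ⟪x i, w j⟫ = if i = j then 1 else 0) : IsDualRieszBasisPair x w := by
  obtain ⟨b, T, hxT⟩ := hx
  have hwT : ∀ j, w j = T.symm.adjoint (b j) :=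
    eq_adjoint_symm_of_biorthogonal b T (by simpa only [hxT] using hw)
  refine ⟨⟨b, T, hxT⟩, ⟨b, T.symm.adjoint, hwT⟩, hw, fun f => ?_⟩
  simpa only [hxT, hwT] using hasSum_inner_adjoint_symm_smul b T f

lemma IsDualRieszBasisPair.symm {x y : ι → H} (h : IsDualRieszBasisPair x y) :
    IsDualRieszBasisPair y x :=
  .of_biorthogonal h.2.1 fun i j => by
    rw [← inner_conj_symm, h.2.2.1 j i]
    split_ifs <;> simp_all [eq_comm]

end RieszBasis

lemma inner_sum_smul_sum_smul_of_biorthogonal {𝕜 E m κ : Type*} [RCLike 𝕜]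
    [NormedAddCommGroup E] [InnerProductSpace 𝕜 E] [Fintype m] [DecidableEq m]
    {x y : m × κ → E}
    (hxy : ∀ i j, inner 𝕜 (y j) (x i) = if i = j then 1 else 0) {A D : Matrix m m 𝕜}
    (hAD : A * Dᴴ = 1) (i j : m × κ) :
    inner 𝕜 (∑ l, D j.1 l • y (l, j.2)) (∑ l, A i.1 l • x (l, i.2)) =
      if i = j then 1 else 0 := by
  classical
  obtain ⟨k, n⟩ := i
  obtain ⟨k', n'⟩ := j
  simp only [sum_inner, inner_sum, inner_smul_left, inner_smul_right, hxy, Prod.mk.injEq]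
  by_cases hn : n = n'
  · subst hn
    have := congrFun (congrFun hAD k) k'
    simp only [Matrix.mul_apply, Matrix.conjTranspose_apply, Matrix.one_apply] at this
    simpa [mul_comm, RCLike.star_def] using this
  · simp [hn]

def quadIndex : Fin 4 × ℤ ≃ ℤ :=
  (Equiv.prodComm _ _).trans ((Int.divModEquiv 4).symm.trans (Equiv.subRight 1))

lemma quadIndex_apply (k : Fin 4) (n : ℤ) : quadIndex (k, n) = 4 * n + k - 1 := by
  simp only [quadIndex, Equiv.trans_apply, Equiv.prodComm_apply, Prod.swap_prod_mk,
    Int.divModEquiv_symm_apply, Nat.cast_ofNat, Equiv.subRight_apply]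
  ring

/-- Row `k` holds the coefficients of `z (k, n)` in terms of `x (4n - 1), …, x (4n + 2)`;
those of `diffDualMatrix` express `w (k, n)` through `y`. -/
def diffMatrix : Matrix (Fin 4) (Fin 4) ℂ :=
  !![-1, 1, 0, 0; 0, 1, 0, 0; 0, -1, 1, 0; 0, 1, -2, 1]

def diffDualMatrix : Matrix (Fin 4) (Fin 4) ℂ :=
  !![-1, 0, 0, 0; 1, 1, 1, 1; 0, 0, 1, 2; 0, 0, 0, 1]

lemma diffMatrix_mul_conjTranspose : diffMatrix * diffDualMatrixᴴ = 1 := by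
  ext i j
  fin_cases i <;> fin_cases j <;>
    simp [diffMatrix, diffDualMatrix, Matrix.mul_apply, Fin.sum_univ_four, map_ofNat]
  norm_num

theorem stmt15_general {H : Type*} [NormedAddCommGroup H] [InnerProductSpace ℂ H]
    [CompleteSpace H]
    (x y : ℤ → H) (hxy : IsDualRieszBasisPair x y)
    (z w : Fin 4 × ℤ → H)
    (hz : ∀ i : Fin 4 × ℤ, z i =
      ![x (4 * i.2) - x (4 * i.2 - 1), x (4 * i.2),
        x (4 * i.2 + 1) - x (4 * i.2),
        x (4 * i.2) - (2 : ℂ) • x (4 * i.2 + 1) + x (4 * i.2 + 2)] i.1)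
    (hw : ∀ i : Fin 4 × ℤ, w i =
      ![-y (4 * i.2 - 1),
        y (4 * i.2 - 1) + y (4 * i.2) + y (4 * i.2 + 1) + y (4 * i.2 + 2),
        y (4 * i.2 + 1) + (2 : ℂ) • y (4 * i.2 + 2),
        y (4 * i.2 + 2)] i.1) :
    IsDualRieszBasisPair z w ∧
      ∀ F : H, HasSum (fun i : Fin 4 × ℤ => ⟪F, z i⟫ • w i) F := by
  obtain ⟨⟨e, T, hxT⟩, -, hxy, -⟩ := hxy
  have hz' : ∀ i, z i = ∑ l, diffMatrix i.1 l • x (quadIndex (l, i.2)) := by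
    rintro ⟨k, n⟩
    rw [hz]
    fin_cases k <;>
      simp [diffMatrix, Fin.sum_univ_four, quadIndex_apply, add_sub_assoc] <;> abel
  have hw' : ∀ i, w i = ∑ l, diffDualMatrix i.1 l • y (quadIndex (l, i.2)) := by
    rintro ⟨k, n⟩
    rw [hw]
    fin_cases k <;>
      simp [diffDualMatrix, Fin.sum_univ_four, quadIndex_apply, add_sub_assoc] <;> abel
  let e' := e.compEquiv quadIndex
  have hzRiesz : IsRieszBasis z := by
    refine ⟨e', (e'.blockEquiv _ _ diffMatrix_mul_conjTranspose).trans T, fun ⟨k, n⟩ => ?_⟩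
    rw [ContinuousLinearEquiv.trans_apply, e'.blockEquiv_apply, hz']
    simp [e', hxT]
  have hzw : IsDualRieszBasisPair z w := by
    refine .of_biorthogonal hzRiesz fun i j => ?_
    rw [hz', hw']
    -- the two `if`s differ only in the `Decidable` instance of `i = j`
    exact (inner_sum_smul_sum_smul_of_biorthogonal (x := x ∘ quadIndex) (y := y ∘ quadIndex)
      (fun i j => by simp [hxy]) diffMatrix_mul_conjTranspose i j).trans (by congr)
  exact ⟨hzw, hzw.symm.2.2.2⟩

theorem stmt15 {H : Type*} [NormedAddCommGroup H] [InnerProductSpace ℂ H]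
    [CompleteSpace H] [TopologicalSpace.SeparableSpace H]
    (x y : ℤ → H) (hxy : IsDualRieszBasisPair x y)
    (z w : Fin 4 × ℤ → H)
    (hz : ∀ i : Fin 4 × ℤ, z i =
      ![x (4 * i.2) - x (4 * i.2 - 1), x (4 * i.2),
        x (4 * i.2 + 1) - x (4 * i.2),
        x (4 * i.2) - (2 : ℂ) • x (4 * i.2 + 1) + x (4 * i.2 + 2)] i.1)
    (hw : ∀ i : Fin 4 × ℤ, w i =
      ![-y (4 * i.2 - 1),
        y (4 * i.2 - 1) + y (4 * i.2) + y (4 * i.2 + 1) + y (4 * i.2 + 2),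
        y (4 * i.2 + 1) + (2 : ℂ) • y (4 * i.2 + 2),
        y (4 * i.2 + 2)] i.1) :
    IsDualRieszBasisPair z w ∧
      ∀ F : H, HasSum (fun i : Fin 4 × ℤ => ⟪F, z i⟫ • w i) F :=
  stmt15_general x y hxy z w hz hw
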